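/- arXiv:1702.01973 — 4 statements merged into one kernel-verified Lean document; each statement's English description precedes it below -/
import Mathlib

section
/- For every real α > 2, reals β ≥ 1, ε > 0, and every positive integer k, there exists a natural number d ≥ 1 (depending only on α, β, ε and k) with the following property. For all reals P > 0, 𝒩 > 0 and x > 0 satisfying √2·x ≤ (P/((1+ε)·β·𝒩))^(1/α), let T be a finite set of stations in ℝ² containing at most k stations in each box of the grid G_x, and let u ∈ T be a station such that every station w ∈ T with w ≠ u lies in a box at box-distance at least d from the box of u (in particular no other station of T lies in u's box). Then for every point v ∈ ℝ² with 0 < dist(u,v) ≤ √2·x, one has SINR(u,v,T) ≥ β and P/dist(u,v)^α ≥ (1+ε)·β·𝒩; that is, v successfully receives u's message when the stations of T transmit simultaneously. -/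
noncomputable section
open scoped Classical

/-- Points of the Euclidean plane. -/
abbrev Pt := EuclideanSpace ℝ (Fin 2)

/-- The grid coordinates of the box of the grid `G_x` containing a point `p`:
the box with coordinates `(a,b)` is `[a·x,(a+1)·x) × [b·x,(b+1)·x)`. -/
def gridCoord (x : ℝ) (p : Pt) : ℤ × ℤ := (⌊p 0 / x⌋, ⌊p 1 / x⌋)

/-- The box-distance between the boxes with grid coordinates `c₁` and `c₂`:
`max (0, max (|a₁−a₂|, |b₁−b₂|) − 1)`. -/
def boxDist (c₁ c₂ : ℤ × ℤ) : ℕ :=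
  (max |c₁.1 - c₂.1| |c₁.2 - c₂.2| - 1).toNat

/-!
The signal of `u` at any `v` with `dist u v ≤ √2·x` is at least `B = P/(√2·x)^α`, and the range
condition says exactly `(1+ε)β𝒩 ≤ B`. A station `w` whose box is offset from the box of `u` by
`c ∈ ℤ²` with `‖c‖ ≥ 4` (sup norm) is at distance at least `√2·x‖c‖/4` from `v`, so it contributes
at most `4^α B ‖c‖^(-α)`. With at most `k` stations per box the interference is therefore at most
`4^α B k` times a partial sum of `∑_{c ∈ ℤ²} ‖c‖^(-α)` over offsets of norm greater than `d`. This series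
converges because `α > 2`, so a large enough `d`, depending only on `α, β, ε, k`, makes the
interference at most `ε/((1+ε)β)·B`, whence `β(𝒩 + I) ≤ B/(1+ε) + εB/(1+ε) = B`.
-/

open Finset

lemma norm_intProd_eq_max_abs (c : ℤ × ℤ) : ‖c‖ = ((max |c.1| |c.2| : ℤ) : ℝ) := by
  simp [Prod.norm_def, Int.norm_eq_abs]

lemma abs_floor_sub_floor_lt (s t : ℝ) : ((|⌊s⌋ - ⌊t⌋| : ℤ) : ℝ) < |s - t| + 1 := by
  have := Int.floor_le s; have := Int.sub_one_lt_floor s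
  have := Int.floor_le t; have := Int.sub_one_lt_floor t
  push_cast
  rw [abs_sub_lt_iff]
  constructor <;> linarith [le_abs_self (s - t), neg_abs_le (s - t)]

lemma mul_norm_gridCoord_sub_sub_one_lt {x : ℝ} (hx : 0 < x) (p q : Pt) :
    x * (‖gridCoord x p - gridCoord x q‖ - 1) < dist p q := by
  have hcoord (i : Fin 2) : ((|⌊p i / x⌋ - ⌊q i / x⌋| : ℤ) : ℝ) - 1 < dist p q / x :=
    calc ((|⌊p i / x⌋ - ⌊q i / x⌋| : ℤ) : ℝ) - 1 < |p i / x - q i / x| :=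
          sub_lt_iff_lt_add.2 (abs_floor_sub_floor_lt _ _)
      _ = dist (p i) (q i) / x := by rw [← sub_div, abs_div, abs_of_pos hx, Real.dist_eq]
      _ ≤ dist p q / x := by gcongr; exact PiLp.dist_apply_le p q i
  rw [← lt_div_iff₀' hx, norm_intProd_eq_max_abs, Int.cast_max, ← max_sub_sub_right]
  exact max_lt (hcoord 0) (hcoord 1)

lemma mul_norm_gridCoord_sub_div_four_le_dist {x : ℝ} (hx : 0 < x) {u v w : Pt}
    (huv : dist u v ≤ √2 * x) (hw : 4 ≤ ‖gridCoord x w - gridCoord x u‖) :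
    √2 * x * ‖gridCoord x w - gridCoord x u‖ / 4 ≤ dist w v := by
  set n := ‖gridCoord x w - gridCoord x u‖
  have hsqrt : √2 ≤ 3 / 2 := by
    rw [Real.sqrt_le_left (by norm_num)]; norm_num
  have hn : √2 * n / 4 ≤ n - 1 - √2 := by nlinarith
  have htri : dist w u ≤ dist w v + dist u v := dist_comm v u ▸ dist_triangle w v u
  nlinarith [mul_le_mul_of_nonneg_left hn hx.le, mul_norm_gridCoord_sub_sub_one_lt hx w u]

lemma add_one_le_norm_sub_of_le_boxDist {d : ℕ} (hd : 0 < d) {c₁ c₂ : ℤ × ℤ}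
    (h : d ≤ boxDist c₁ c₂) : (d : ℝ) + 1 ≤ ‖c₁ - c₂‖ := by
  rw [norm_intProd_eq_max_abs]
  unfold boxDist at h
  exact_mod_cast (by simp only [Prod.fst_sub, Prod.snd_sub]; omega :
    (d : ℤ) + 1 ≤ max |(c₁ - c₂).1| |(c₁ - c₂).2|)

lemma summable_norm_rpow_neg_intProd {α : ℝ} (hα : 2 < α) :
    Summable fun c : ℤ × ℤ => ‖c‖ ^ (-α) := by
  refine (finTwoArrowEquiv ℤ).summable_iff.1 ?_
  convert EisensteinSeries.summable_one_div_norm_rpow hα using 2 with c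
  simp [EisensteinSeries.norm_eq_max_natAbs, Prod.norm_def, Int.norm_eq_abs]

lemma exists_sum_lt_of_forall_lt_norm {ι : Type*} [Norm ι] {f : ι → ℝ} (hf : Summable f)
    {δ : ℝ} (hδ : 0 < δ) :
    ∃ R : ℝ, ∀ S : Finset ι, (∀ i ∈ S, R < ‖i‖) → ∑ i ∈ S, f i < δ := by
  obtain ⟨s, hs⟩ := summable_iff_vanishing_norm.1 hf δ hδ
  obtain ⟨R, hR⟩ := (s.image (‖·‖)).bddAbove
  refine ⟨R, fun S hS => (le_abs_self _).trans_lt (hs S ?_)⟩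
  exact disjoint_left.2 fun i hiS his =>
    (hS i hiS).not_ge (hR (mem_coe.2 (mem_image_of_mem _ his)))

lemma Finset.sum_comp_le_nsmul_sum_image {ι κ M : Type*} [DecidableEq κ] [AddCommMonoid M]
    [PartialOrder M] [IsOrderedAddMonoid M] {s : Finset ι} {g : ι → κ} {f : κ → M} {k : ℕ}
    (hf : ∀ y ∈ s.image g, 0 ≤ f y) (hg : ∀ y, #{i ∈ s | g i = y} ≤ k) :
    ∑ i ∈ s, f (g i) ≤ k • ∑ y ∈ s.image g, f y := by
  rw [sum_comp, smul_sum]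
  exact sum_le_sum fun y hy => nsmul_le_nsmul_left (hf y hy) (hg y)

lemma div_rpow_le_div_rpow_mul_rpow_neg {P a n D α : ℝ} (hP : 0 ≤ P) (ha : 0 < a) (hn : 0 < n)
    (hα : 0 ≤ α) (h : a * n ≤ D) : P / D ^ α ≤ P / a ^ α * n ^ (-α) := by
  calc P / D ^ α ≤ P / (a * n) ^ α := by gcongr
    _ = P / a ^ α * n ^ (-α) := by
      rw [Real.mul_rpow ha.le hn.le, Real.rpow_neg hn.le, div_mul_eq_div_div,
        div_eq_mul_inv (P / a ^ α)]

lemma sum_erase_div_dist_rpow_le {α x P R δ : ℝ} {k : ℕ} (hα : 0 ≤ α) (hx : 0 < x)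
    (hP : 0 ≤ P)
    (hR : ∀ S : Finset (ℤ × ℤ), (∀ c ∈ S, R < ‖c‖) → ∑ c ∈ S, ‖c‖ ^ (-α) < δ)
    {T : Finset Pt} (hT : ∀ ab : ℤ × ℤ, #{p ∈ T | gridCoord x p = ab} ≤ k) {u v : Pt}
    (huv : dist u v ≤ √2 * x)
    (hfar : ∀ w ∈ T.erase u, max R 4 < ‖gridCoord x w - gridCoord x u‖) :
    ∑ w ∈ T.erase u, P / dist w v ^ α ≤ 4 ^ α * (P / (√2 * x) ^ α) * (k * δ) := by
  set c : Pt → ℤ × ℤ := fun w => gridCoord x w - gridCoord x u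
  have hpoint (w) (hw : w ∈ T.erase u) :
      P / dist w v ^ α ≤ 4 ^ α * (P / (√2 * x) ^ α) * ‖c w‖ ^ (-α) := by
    have h4 : 4 ≤ ‖c w‖ := (le_max_right _ _).trans (hfar w hw).le
    have hdist : √2 * x / 4 * ‖c w‖ ≤ dist w v := by
      have := mul_norm_gridCoord_sub_div_four_le_dist hx huv h4
      linarith
    calc P / dist w v ^ α ≤ P / (√2 * x / 4) ^ α * ‖c w‖ ^ (-α) :=
          div_rpow_le_div_rpow_mul_rpow_neg hP (by positivity) (by linarith) hα hdist
      _ = 4 ^ α * (P / (√2 * x) ^ α) * ‖c w‖ ^ (-α) := by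
          rw [Real.div_rpow (by positivity) (by norm_num)]
          field_simp
  have hfibre (y : ℤ × ℤ) : #{w ∈ T.erase u | c w = y} ≤ k := by
    refine (card_le_card fun w hw => ?_).trans (hT (y + gridCoord x u))
    simp only [mem_filter, c, sub_eq_iff_eq_add] at hw ⊢
    exact ⟨mem_of_mem_erase hw.1, hw.2⟩
  have htail : ∑ y ∈ (T.erase u).image c, ‖y‖ ^ (-α) < δ := by
    refine hR _ fun y hy => ?_
    obtain ⟨w, hw, rfl⟩ := mem_image.1 hy
    exact (le_max_left _ _).trans_lt (hfar w hw)
  calc ∑ w ∈ T.erase u, P / dist w v ^ α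
      ≤ ∑ w ∈ T.erase u, 4 ^ α * (P / (√2 * x) ^ α) * ‖c w‖ ^ (-α) := sum_le_sum hpoint
    _ = 4 ^ α * (P / (√2 * x) ^ α) * ∑ w ∈ T.erase u, ‖c w‖ ^ (-α) := by rw [mul_sum]
    _ ≤ 4 ^ α * (P / (√2 * x) ^ α) * (k * δ) := by
      gcongr
      calc ∑ w ∈ T.erase u, ‖c w‖ ^ (-α)
          ≤ k • ∑ y ∈ (T.erase u).image c, ‖y‖ ^ (-α) :=
            sum_comp_le_nsmul_sum_image (f := (‖·‖ ^ (-α))) (fun _ _ => by positivity) hfibre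
        _ ≤ k * δ := by rw [nsmul_eq_mul]; gcongr

/-- **Main dilution lemma.** For every `α > 2`, `β ≥ 1`, `ε > 0` and positive integer `k`,
there is a `d ≥ 1` (depending only on `α, β, ε, k`) such that for all `P, 𝒩, x > 0` with
`√2·x ≤ (P/((1+ε)·β·𝒩))^(1/α)`, for every finite set `T` of stations with at most `k`
stations per box of the grid `G_x`, and every `u ∈ T` such that every other station of `T`
lies in a box at box-distance at least `d` from the box of `u`, every point `v` with
`0 < dist u v ≤ √2·x` successfully receives `u`'s message: `P/dist(u,v)^α ≥ (1+ε)·β·𝒩`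
and `SINR(u,v,T) ≥ β`. -/
theorem ssf_dilution_lemma
    (α β ε : ℝ) (hα : 2 < α) (hβ : 1 ≤ β) (hε : 0 < ε) (k : ℕ) (hk : 0 < k) :
    ∃ d : ℕ, 1 ≤ d ∧
      ∀ P 𝒩 x : ℝ, 0 < P → 0 < 𝒩 → 0 < x →
        Real.sqrt 2 * x ≤ (P / ((1 + ε) * β * 𝒩)) ^ (1 / α) →
        ∀ T : Finset Pt,
          (∀ ab : ℤ × ℤ, (T.filter (fun p => gridCoord x p = ab)).card ≤ k) →
          ∀ u ∈ T,
            (∀ w ∈ T, w ≠ u → d ≤ boxDist (gridCoord x w) (gridCoord x u)) →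
            ∀ v : Pt, 0 < dist u v → dist u v ≤ Real.sqrt 2 * x →
              (1 + ε) * β * 𝒩 ≤ P / dist u v ^ α ∧
              β * (𝒩 + ∑ w ∈ T.erase u, P / dist w v ^ α) ≤ P / dist u v ^ α := by
  have hβ₀ : 0 < β := by linarith
  have hk₀ : (0 : ℝ) < k := by exact_mod_cast hk
  -- makes the interference at most `ε / ((1 + ε) * β)` times the weakest admissible signal
  set δ := ε / ((1 + ε) * β * k * 4 ^ α)
  obtain ⟨R, hR⟩ := exists_sum_lt_of_forall_lt_norm (summable_norm_rpow_neg_intProd hα)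
    (show 0 < δ by positivity)
  refine ⟨⌈R⌉₊ + 4, by omega, ?_⟩
  intro P 𝒩 x hP h𝒩 hx hrange T hT u _ hfar v huv₀ huv
  set B := P / (√2 * x) ^ α
  have hnoise : (1 + ε) * β * 𝒩 ≤ B := by
    rw [one_div, Real.le_rpow_inv_iff_of_pos (by positivity) (by positivity) (by linarith)]
      at hrange
    exact (le_div_comm₀ (by positivity) (by positivity)).1 hrange
  have hsignal : B ≤ P / dist u v ^ α := by simp only [B]; gcongr
  have hinterf := sum_erase_div_dist_rpow_le (by linarith) hx hP.le hR hT huv fun w hw => by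
    have := add_one_le_norm_sub_of_le_boxDist (by omega)
      (hfar w (mem_of_mem_erase hw) (ne_of_mem_erase hw))
    push_cast at this
    exact max_lt (by linarith [Nat.le_ceil R]) (by linarith [(⌈R⌉₊).cast_nonneg (α := ℝ)])
  refine ⟨hnoise.trans hsignal, le_trans ?_ hsignal⟩
  have hinterf_le : (1 + ε) * (β * ∑ w ∈ T.erase u, P / dist w v ^ α) ≤ ε * B :=
    calc _ ≤ (1 + ε) * (β * (4 ^ α * B * (k * δ))) := by gcongr
      _ = ε * B := by simp only [δ]; field_simp
  refine le_of_mul_le_mul_left ?_ (by positivity : (0 : ℝ) < 1 + ε)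
  linarith
end
end

section
/- For every real α > 2, reals β ≥ 1, ε > 0, and every positive integer k, let d ≥ 1 be a natural number with the property of the main dilution lemma (i.e., silencing all boxes at box-distance less than d around a transmitter guarantees reception within distance √2·x). For all reals P > 0, 𝒩 > 0 and x > 0 with √2·x ≤ (P/((1+ε)·β·𝒩))^(1/α), let T be a finite set of stations in ℝ² containing at most k stations in each box of the grid G_x, let N be a positive integer, let ℓ : T → {1,…,N} be an injective labeling, and let F be an (N,c)-strongly selective family with c = k²·(2d+1)², assuming c ≤ N. Then for every station u ∈ T there exists a set A ∈ F such that ℓ(u) ∈ A and, letting T_A = {w ∈ T : ℓ(w) ∈ A} be the stations transmitting in the round corresponding to A, every point v ∈ ℝ² with 0 < dist(u,v) ≤ √2·x satisfies SINR(u,v,T_A) ≥ β and P/dist(u,v)^α ≥ (1+ε)·β·𝒩. In other words, by executing one (N,c)-ssf schedule, every station successfully transmits its message to all of its neighbors within distance √2·x in some round. -/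
/-!
The stations in the `(2d+1) × (2d+1)` block of boxes centred at the box of `u` number at most
`k (2d+1)² ≤ c`, so the strongly selective family contains a round `A` in which `u` is the only
transmitter of that block. Every other transmitter of that round then lies at box-distance at
least `d` from `u`, which is exactly the situation of the dilution lemma.
-/

noncomputable section
open scoped Classical

/-- An `(N,c)`-strongly selective family: a family `F` of subsets of `{1,…,N}` such that
for every nonempty `S ⊆ {1,…,N}` with `|S| ≤ c` and every `y ∈ S` there is `A ∈ F`
with `S ∩ A = {y}`. -/
def IsSSF (N c : ℕ) (F : Finset (Finset ℕ)) : Prop :=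
  (∀ A ∈ F, A ⊆ Finset.Icc 1 N) ∧
  ∀ S : Finset ℕ, S ⊆ Finset.Icc 1 N → S.Nonempty → S.card ≤ c →
    ∀ y ∈ S, ∃ A ∈ F, S ∩ A = {y}

open Finset

def gridBlock (c : ℤ × ℤ) (d : ℕ) : Finset (ℤ × ℤ) :=
  Icc (c.1 - d) (c.1 + d) ×ˢ Icc (c.2 - d) (c.2 + d)

theorem card_gridBlock (c : ℤ × ℤ) (d : ℕ) : (gridBlock c d).card = (2 * d + 1) ^ 2 := by
  rw [gridBlock, card_product, Int.card_Icc, Int.card_Icc]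
  have h₁ : (c.1 + d + 1 - (c.1 - d)).toNat = 2 * d + 1 := by omega
  have h₂ : (c.2 + d + 1 - (c.2 - d)).toNat = 2 * d + 1 := by omega
  rw [h₁, h₂, sq]

theorem mem_gridBlock_self (c : ℤ × ℤ) (d : ℕ) : c ∈ gridBlock c d := by
  simp only [gridBlock, mem_product, mem_Icc]
  omega

theorem mem_gridBlock_of_boxDist_lt {c c' : ℤ × ℤ} {d : ℕ} (h : boxDist c' c < d) :
    c' ∈ gridBlock c d := by
  simp only [gridBlock, mem_product, mem_Icc]
  unfold boxDist at h
  rcases abs_cases (c'.1 - c.1) with ⟨h₁, _⟩ | ⟨h₁, _⟩ <;>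
    rcases abs_cases (c'.2 - c.2) with ⟨h₂, _⟩ | ⟨h₂, _⟩ <;>
    rw [h₁, h₂] at h <;> omega

theorem card_filter_gridCoord_mem_le {x : ℝ} {k : ℕ} {T : Finset Pt}
    (hT : ∀ ab : ℤ × ℤ, (T.filter (fun p => gridCoord x p = ab)).card ≤ k)
    (B : Finset (ℤ × ℤ)) :
    (T.filter (fun p => gridCoord x p ∈ B)).card ≤ k * B.card :=
  card_le_mul_card_image_of_maps_to (fun _ hp => (mem_filter.1 hp).2) k fun ab _ =>
    (card_le_card (filter_subset_filter _ (filter_subset _ _))).trans (hT ab)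

theorem IsSSF.exists_isolating {N c : ℕ} {F : Finset (Finset ℕ)} (hF : IsSSF N c F)
    {ι : Type*} {W : Finset ι} {ℓ : ι → ℕ} (hℓ : ∀ w ∈ W, ℓ w ∈ Icc 1 N)
    (hinj : Set.InjOn ℓ W) (hW : W.card ≤ c) {u : ι} (hu : u ∈ W) :
    ∃ A ∈ F, ℓ u ∈ A ∧ ∀ w ∈ W, ℓ w ∈ A → w = u := by
  have huS : ℓ u ∈ W.image ℓ := mem_image_of_mem ℓ hu
  obtain ⟨A, hAF, hA⟩ := hF.2 (W.image ℓ) (fun _ hy => by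
      obtain ⟨w, hw, rfl⟩ := mem_image.1 hy
      exact hℓ w hw)
    ⟨_, huS⟩ ((card_image_le).trans hW) (ℓ u) huS
  have hiso : ∀ y, y ∈ W.image ℓ → y ∈ A → y = ℓ u := fun y hy hyA =>
    mem_singleton.1 (hA ▸ mem_inter.2 ⟨hy, hyA⟩)
  refine ⟨A, hAF, (mem_inter.1 (hA ▸ mem_singleton_self (ℓ u))).2, fun w hw hwA => ?_⟩
  exact hinj hw hu (hiso _ (mem_image_of_mem ℓ hw) hwA)

theorem ssf_replaces_dilution_general
    (α β ε : ℝ) (k : ℕ)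
    (d : ℕ)
    (hd : ∀ P 𝒩 x : ℝ, 0 < P → 0 < 𝒩 → 0 < x →
      Real.sqrt 2 * x ≤ (P / ((1 + ε) * β * 𝒩)) ^ (1 / α) →
      ∀ T : Finset Pt,
        (∀ ab : ℤ × ℤ, (T.filter (fun p => gridCoord x p = ab)).card ≤ k) →
        ∀ u ∈ T,
          (∀ w ∈ T, w ≠ u → d ≤ boxDist (gridCoord x w) (gridCoord x u)) →
          ∀ v : Pt, 0 < dist u v → dist u v ≤ Real.sqrt 2 * x →
            (1 + ε) * β * 𝒩 ≤ P / dist u v ^ α ∧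
            β * (𝒩 + ∑ w ∈ T.erase u, P / dist w v ^ α) ≤ P / dist u v ^ α) :
    ∀ P 𝒩 x : ℝ, 0 < P → 0 < 𝒩 → 0 < x →
      Real.sqrt 2 * x ≤ (P / ((1 + ε) * β * 𝒩)) ^ (1 / α) →
      ∀ T : Finset Pt,
        (∀ ab : ℤ × ℤ, (T.filter (fun p => gridCoord x p = ab)).card ≤ k) →
        ∀ N : ℕ, 0 < N →
        ∀ ℓ : Pt → ℕ,
          (∀ p ∈ T, ℓ p ∈ Finset.Icc 1 N) →
          (∀ p ∈ T, ∀ q ∈ T, ℓ p = ℓ q → p = q) →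
          ∀ F : Finset (Finset ℕ),
            k ^ 2 * (2 * d + 1) ^ 2 ≤ N →
            IsSSF N (k ^ 2 * (2 * d + 1) ^ 2) F →
            ∀ u ∈ T, ∃ A ∈ F, ℓ u ∈ A ∧
              ∀ v : Pt, 0 < dist u v → dist u v ≤ Real.sqrt 2 * x →
                (1 + ε) * β * 𝒩 ≤ P / dist u v ^ α ∧
                β * (𝒩 + ∑ w ∈ (T.filter (fun w => ℓ w ∈ A)).erase u, P / dist w v ^ α)
                  ≤ P / dist u v ^ α := by
  intro P 𝒩 x hP h𝒩 hx hsx T hT N _ ℓ hℓ hinj F _ hF u hu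
  set near := T.filter (fun w => gridCoord x w ∈ gridBlock (gridCoord x u) d)
  have hnear : near.card ≤ k ^ 2 * (2 * d + 1) ^ 2 :=
    calc near.card ≤ k * (gridBlock (gridCoord x u) d).card := card_filter_gridCoord_mem_le hT _
      _ ≤ k ^ 2 * (2 * d + 1) ^ 2 := by
        rw [card_gridBlock]
        gcongr
        exact Nat.le_self_pow two_ne_zero k
  obtain ⟨A, hAF, huA, hiso⟩ := hF.exists_isolating (W := near)
    (fun w hw => hℓ w (mem_filter.1 hw).1)
    (fun p hp q hq => hinj p (mem_filter.1 hp).1 q (mem_filter.1 hq).1)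
    hnear (mem_filter.2 ⟨hu, mem_gridBlock_self _ d⟩)
  refine ⟨A, hAF, huA, hd P 𝒩 x hP h𝒩 hx hsx _ (fun ab => ?_) u (mem_filter.2 ⟨hu, huA⟩) ?_⟩
  · exact (card_le_card (filter_subset_filter _ (filter_subset _ _))).trans (hT ab)
  · intro w hw hwu
    by_contra! hlt
    obtain ⟨hwT, hwA⟩ := mem_filter.1 hw
    exact hwu (hiso w (mem_filter.2 ⟨hwT, mem_gridBlock_of_boxDist_lt hlt⟩) hwA)

/-- **SSF-based dilution.** Let `d ≥ 1` have the property of the main dilution lemma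
(silencing all boxes at box-distance less than `d` around a transmitter guarantees
reception within distance `√2·x`).  Then for all `P, 𝒩, x > 0` with
`√2·x ≤ (P/((1+ε)·β·𝒩))^(1/α)`, every finite set `T` of stations with at most `k`
stations per box of `G_x`, every injective labeling `ℓ : T → {1,…,N}`, and every
`(N,c)`-ssf `F` with `c = k²·(2d+1)²` and `c ≤ N`: for every `u ∈ T` there is `A ∈ F`
with `ℓ u ∈ A` such that in the round corresponding to `A` (where the transmitting set is
`T_A = {w ∈ T : ℓ w ∈ A}`), every point `v` with `0 < dist u v ≤ √2·x` successfully
receives `u`'s message. -/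
theorem ssf_replaces_dilution
    (α β ε : ℝ) (hα : 2 < α) (hβ : 1 ≤ β) (hε : 0 < ε) (k : ℕ) (hk : 0 < k)
    (d : ℕ) (hd1 : 1 ≤ d)
    (hd : ∀ P 𝒩 x : ℝ, 0 < P → 0 < 𝒩 → 0 < x →
      Real.sqrt 2 * x ≤ (P / ((1 + ε) * β * 𝒩)) ^ (1 / α) →
      ∀ T : Finset Pt,
        (∀ ab : ℤ × ℤ, (T.filter (fun p => gridCoord x p = ab)).card ≤ k) →
        ∀ u ∈ T,
          (∀ w ∈ T, w ≠ u → d ≤ boxDist (gridCoord x w) (gridCoord x u)) →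
          ∀ v : Pt, 0 < dist u v → dist u v ≤ Real.sqrt 2 * x →
            (1 + ε) * β * 𝒩 ≤ P / dist u v ^ α ∧
            β * (𝒩 + ∑ w ∈ T.erase u, P / dist w v ^ α) ≤ P / dist u v ^ α) :
    ∀ P 𝒩 x : ℝ, 0 < P → 0 < 𝒩 → 0 < x →
      Real.sqrt 2 * x ≤ (P / ((1 + ε) * β * 𝒩)) ^ (1 / α) →
      ∀ T : Finset Pt,
        (∀ ab : ℤ × ℤ, (T.filter (fun p => gridCoord x p = ab)).card ≤ k) →
        ∀ N : ℕ, 0 < N →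
        ∀ ℓ : Pt → ℕ,
          (∀ p ∈ T, ℓ p ∈ Finset.Icc 1 N) →
          (∀ p ∈ T, ∀ q ∈ T, ℓ p = ℓ q → p = q) →
          ∀ F : Finset (Finset ℕ),
            k ^ 2 * (2 * d + 1) ^ 2 ≤ N →
            IsSSF N (k ^ 2 * (2 * d + 1) ^ 2) F →
            ∀ u ∈ T, ∃ A ∈ F, ℓ u ∈ A ∧
              ∀ v : Pt, 0 < dist u v → dist u v ≤ Real.sqrt 2 * x →
                (1 + ε) * β * 𝒩 ≤ P / dist u v ^ α ∧
                β * (𝒩 + ∑ w ∈ (T.filter (fun w => ℓ w ∈ A)).erase u, P / dist w v ^ α)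
                  ≤ P / dist u v ^ α :=
  ssf_replaces_dilution_general α β ε k d hd
end
end

section
/- Let α > 2 be real, x > 0, P > 0, let k and d be positive integers, let v ∈ ℝ², and let T be a finite set of stations in ℝ² containing at most k stations in each box of the grid G_x and such that every station of T lies in a box at box-distance at least d from the box containing v. Then the total interference at v satisfies Σ_{w ∈ T} P/dist(w,v)^α ≤ (8·k·P/x^α)·c_d, where c_d = Σ_{i=d}^∞ (1/i^(α−1) + 1/i^α) (this series converges since α > 2) and dist is the Euclidean distance. -/
noncomputable section

/-!
Stations in a box at box-distance `m ≥ 1` from the box of `v` are at Euclidean distance at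
least `m x` from `v`, and the boxes at box-distance exactly `m` form the ring between the
`(2m+3) × (2m+3)` and the `(2m+1) × (2m+1)` squares of boxes centred at the box of `v`, i.e.
`8(m+1)` boxes, holding at most `8(m+1)k` stations. Grouping the stations by box-distance
therefore bounds the interference by
`Σ_{m ≥ d} 8(m+1)k · P/(m x)^α = (8kP/x^α) Σ_{m ≥ d} (1/m^(α-1) + 1/m^α)`.
-/

open Finset

section Geometry

variable {x : ℝ}

lemma floor_div_sub_floor_div_sub_one_mul_lt (hx : 0 < x) (s t : ℝ) :
    ((⌊s / x⌋ - ⌊t / x⌋ : ℤ) - 1 : ℝ) * x < s - t := by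
  have hs := Int.sub_floor_div_mul_nonneg s hx
  have ht := Int.sub_floor_div_mul_lt t hx
  push_cast
  linarith

lemma abs_floor_div_sub_floor_div_sub_one_mul_le (hx : 0 < x) (s t : ℝ) :
    ((|⌊s / x⌋ - ⌊t / x⌋| : ℤ) - 1 : ℝ) * x ≤ |s - t| := by
  have hst := floor_div_sub_floor_div_sub_one_mul_lt hx s t
  have hts := floor_div_sub_floor_div_sub_one_mul_lt hx t s
  push_cast at hst hts ⊢
  rcases abs_cases ((⌊s / x⌋ : ℝ) - ⌊t / x⌋) with ⟨h, -⟩ | ⟨h, -⟩ <;> rw [h] <;>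
    linarith [le_abs_self (s - t), neg_abs_le (s - t)]

lemma abs_gridCoord_sub_sub_one_mul_le_dist (hx : 0 < x) (w v : Pt) (i : Fin 2) :
    ((|⌊w i / x⌋ - ⌊v i / x⌋| : ℤ) - 1 : ℝ) * x ≤ dist w v :=
  (abs_floor_div_sub_floor_div_sub_one_mul_le hx _ _).trans
    ((Real.dist_eq _ _).symm.trans_le (PiLp.dist_apply_le w v i))

lemma boxDist_gridCoord_mul_le_dist (hx : 0 < x) (w v : Pt) :
    (boxDist (gridCoord x w) (gridCoord x v) : ℝ) * x ≤ dist w v := by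
  have hcast : (boxDist (gridCoord x w) (gridCoord x v) : ℝ) =
      max (((max |⌊w 0 / x⌋ - ⌊v 0 / x⌋| |⌊w 1 / x⌋ - ⌊v 1 / x⌋| : ℤ) : ℝ) - 1) 0 := by
    rw [← Int.cast_natCast, boxDist, Int.toNat_eq_max]
    push_cast
    rfl
  rw [hcast, max_mul_of_nonneg _ _ hx.le, zero_mul]
  refine max_le ?_ dist_nonneg
  rcases max_choice |⌊w 0 / x⌋ - ⌊v 0 / x⌋| |⌊w 1 / x⌋ - ⌊v 1 / x⌋| with h | h <;> rw [h]
  exacts [abs_gridCoord_sub_sub_one_mul_le_dist hx w v 0,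
    abs_gridCoord_sub_sub_one_mul_le_dist hx w v 1]

end Geometry

section Counting

def gridSquare (c : ℤ × ℤ) (r : ℕ) : Finset (ℤ × ℤ) :=
  Icc (c.1 - r) (c.1 + r) ×ˢ Icc (c.2 - r) (c.2 + r)

lemma mem_gridSquare {c a : ℤ × ℤ} {r : ℕ} :
    a ∈ gridSquare c r ↔ |a.1 - c.1| ≤ r ∧ |a.2 - c.2| ≤ r := by
  simp only [gridSquare, mem_product, mem_Icc, abs_le]
  omega

lemma card_gridSquare (c : ℤ × ℤ) (r : ℕ) : #(gridSquare c r) = (2 * r + 1) ^ 2 := by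
  rw [gridSquare, card_product, Int.card_Icc, Int.card_Icc, sq]
  congr 1 <;> omega

lemma gridSquare_subset_succ (c : ℤ × ℤ) (r : ℕ) : gridSquare c r ⊆ gridSquare c (r + 1) := by
  intro a
  simp only [mem_gridSquare]
  omega

lemma card_gridSquare_succ_sdiff (c : ℤ × ℤ) (r : ℕ) :
    #(gridSquare c (r + 1) \ gridSquare c r) = 8 * (r + 1) := by
  rw [card_sdiff_of_subset (gridSquare_subset_succ c r), card_gridSquare, card_gridSquare]
  ring_nf
  omega

lemma mem_gridSquare_succ_sdiff_of_boxDist_eq {a c : ℤ × ℤ} {m : ℕ} (hm : 0 < m)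
    (h : boxDist a c = m) : a ∈ gridSquare c (m + 1) \ gridSquare c m := by
  rw [boxDist] at h
  rw [mem_sdiff, mem_gridSquare, mem_gridSquare]
  push_cast
  omega

variable {ι : Type*} (s : Finset ι) (g : ι → ℤ × ℤ) {k : ℕ}
  (hk : ∀ a, #{i ∈ s | g i = a} ≤ k) (c : ℤ × ℤ)
include hk

lemma card_filter_boxDist_eq_le {m : ℕ} (hm : 0 < m) :
    #{i ∈ s | boxDist (g i) c = m} ≤ 8 * (m + 1) * k := by
  classical
  calc #{i ∈ s | boxDist (g i) c = m}
      ≤ k * #(gridSquare c (m + 1) \ gridSquare c m) :=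
        card_le_mul_card_image_of_maps_to
          (fun i hi => mem_gridSquare_succ_sdiff_of_boxDist_eq hm (mem_filter.mp hi).2) k
          (fun a _ => (card_le_card (filter_subset_filter _ (filter_subset _ s))).trans (hk a))
    _ = 8 * (m + 1) * k := by rw [card_gridSquare_succ_sdiff, mul_comm]

lemma sum_boxDist_le_sum_layers (f : ℕ → ℝ) (hf : ∀ m, 0 ≤ f m)
    (hs : ∀ i ∈ s, 0 < boxDist (g i) c) :
    ∑ i ∈ s, f (boxDist (g i) c) ≤
      ∑ m ∈ s.image (fun i => boxDist (g i) c), ((8 * (m + 1) * k : ℕ) : ℝ) * f m := by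
  classical
  rw [sum_comp]
  refine sum_le_sum fun m hm => ?_
  obtain ⟨i, hi, rfl⟩ := mem_image.mp hm
  rw [nsmul_eq_mul]
  gcongr
  · exact hf _
  · exact card_filter_boxDist_eq_le s g hk c (hs i hi)

end Counting

lemma sum_le_tsum_nat_add {M : Type*} [AddCommMonoid M] [PartialOrder M] [IsOrderedAddMonoid M]
    [TopologicalSpace M] [OrderClosedTopology M] {f : ℕ → M} {d : ℕ} (s : Finset ℕ)
    (hs : ∀ m ∈ s, d ≤ m) (hf : ∀ i, 0 ≤ f (i + d)) (hsum : Summable fun i => f (i + d)) :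
    ∑ m ∈ s, f m ≤ ∑' i, f (i + d) := by
  have hinj : Set.InjOn (· - d) s := fun a ha b hb hab => by
    have := hs a ha; have := hs b hb; simp only at hab; omega
  have hshift : ∑ m ∈ s, f m = ∑ i ∈ s.image (· - d), f (i + d) := by
    rw [sum_image hinj]
    exact sum_congr rfl fun m hm => by rw [Nat.sub_add_cancel (hs m hm)]
  exact hshift ▸ hsum.sum_le_tsum _ fun i _ => hf i

lemma summable_one_div_nat_add_rpow (d : ℕ) {p : ℝ} (hp : 1 < p) :
    Summable fun i : ℕ => 1 / ((i : ℝ) + d) ^ p :=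
  ((summable_nat_add_iff d).mpr (Real.summable_one_div_nat_rpow.mpr hp)).congr fun i => by
    push_cast; rfl

lemma add_one_mul_div_mul_rpow {m x : ℝ} (hm0 : 0 < m) (hx : 0 < x) (α a : ℝ) :
    (m + 1) * (a / (m * x) ^ α) = a / x ^ α * (1 / m ^ (α - 1) + 1 / m ^ α) := by
  have hsplit : m ^ α = m ^ (α - 1) * m := by
    rw [← Real.rpow_add_one hm0.ne', sub_add_cancel]
  have := Real.rpow_pos_of_pos hm0 (α - 1)
  have := Real.rpow_pos_of_pos hx α
  rw [Real.mul_rpow hm0.le hx.le, hsplit]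
  field_simp

theorem interference_bound_general
    (α : ℝ) (hα : 2 < α) (x P : ℝ) (hx : 0 < x) (hP : 0 < P)
    (k d : ℕ) (hd : 1 ≤ d) (v : Pt)
    (T : Finset Pt)
    (hdens : ∀ ab : ℤ × ℤ, (T.filter (fun p => gridCoord x p = ab)).card ≤ k)
    (hfar : ∀ w ∈ T, d ≤ boxDist (gridCoord x w) (gridCoord x v)) :
    ∑ w ∈ T, P / dist w v ^ α ≤
      8 * k * P / x ^ α *
        ∑' i : ℕ, (1 / ((i : ℝ) + d) ^ (α - 1) + 1 / ((i : ℝ) + d) ^ α) := by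
  set layer : Pt → ℕ := fun w => boxDist (gridCoord x w) (gridCoord x v)
  set c : ℕ → ℝ := fun m => 1 / (m : ℝ) ^ (α - 1) + 1 / (m : ℝ) ^ α
  have hlayer : ∀ w ∈ T, 0 < layer w := fun w hw => Nat.lt_of_lt_of_le hd (hfar w hw)
  have hc : ∀ i, 0 ≤ c (i + d) := fun i => by positivity
  have hcsum : Summable fun i => c (i + d) := by
    simp only [c, Nat.cast_add]
    exact (summable_one_div_nat_add_rpow d (by linarith)).add
      (summable_one_div_nat_add_rpow d (by linarith))
  calc ∑ w ∈ T, P / dist w v ^ α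
      ≤ ∑ w ∈ T, P / ((layer w : ℝ) * x) ^ α := sum_le_sum fun w hw => by
        have : (0 : ℝ) < layer w := Nat.cast_pos.mpr (hlayer w hw)
        gcongr
        exact boxDist_gridCoord_mul_le_dist hx w v
    _ ≤ ∑ m ∈ T.image layer, ((8 * (m + 1) * k : ℕ) : ℝ) * (P / ((m : ℝ) * x) ^ α) :=
        sum_boxDist_le_sum_layers T (gridCoord x) hdens _ (fun m => P / ((m : ℝ) * x) ^ α)
          (fun m => by positivity) hlayer
    _ = 8 * k * P / x ^ α * ∑ m ∈ T.image layer, c m := by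
        rw [mul_sum]
        refine sum_congr rfl fun m hm => ?_
        obtain ⟨w, hw, rfl⟩ := mem_image.mp hm
        rw [← add_one_mul_div_mul_rpow (Nat.cast_pos.mpr (hlayer w hw)) hx]
        push_cast
        ring
    _ ≤ 8 * k * P / x ^ α * ∑' i, c (i + d) := by
        gcongr
        exact sum_le_tsum_nat_add _ (forall_mem_image.2 hfar) hc hcsum
    _ = _ := by simp only [c, Nat.cast_add]

/-- **Interference bound.** If `T` has at most `k` stations per box of `G_x` and every
station of `T` lies in a box at box-distance at least `d ≥ 1` from the box containing `v`,
then `Σ_{w ∈ T} P/dist(w,v)^α ≤ (8·k·P/x^α)·c_d`, where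
`c_d = Σ_{i=d}^∞ (1/i^(α−1) + 1/i^α)` (written as a sum over `i : ℕ` of the terms at
`i + d`; the series converges since `α > 2`). -/
theorem interference_bound
    (α : ℝ) (hα : 2 < α) (x P : ℝ) (hx : 0 < x) (hP : 0 < P)
    (k d : ℕ) (hk : 0 < k) (hd : 1 ≤ d) (v : Pt)
    (T : Finset Pt)
    (hdens : ∀ ab : ℤ × ℤ, (T.filter (fun p => gridCoord x p = ab)).card ≤ k)
    (hfar : ∀ w ∈ T, d ≤ boxDist (gridCoord x w) (gridCoord x v)) :
    ∑ w ∈ T, P / dist w v ^ α ≤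
      8 * k * P / x ^ α *
        ∑' i : ℕ, (1 / ((i : ℝ) + d) ^ (α - 1) + 1 / ((i : ℝ) + d) ^ α) :=
  interference_bound_general α hα x P hx hP k d hd v T hdens hfar
end
end

section
/- There exists an absolute constant K > 0 such that for all positive integers N and c with 2 ≤ c ≤ N, there exists an (N,c)-strongly selective family F of subsets of {1,…,N} with |F| ≤ K·c²·log N. -/
/-!
Colour `{1,…,N}` with `c` colours, independently `m ≈ 8 c² log N` times, and take as sets the
classes of colour `0`. For `|S| = c` and `y ∈ S`, one colouring isolates `y` in `S` with
probability `(1/c)(1 - 1/c)^(c-1) ≥ 1/(4c)`, so all `m` colourings fail with probability at most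
`(1 - 1/(4c))^m < N^-(c+1)`. A union bound over the at most `N^(c+1)` pairs `(S, y)` leaves a
good choice of colourings; smaller sets `S` are handled by enlarging them to size `c`. The
probabilities are expressed as counts of colourings.
-/

noncomputable section

open Finset

theorem Finset.exists_forall_notMem_of_sum_card_lt {ι Ω : Type*} [Fintype Ω] [DecidableEq Ω]
    (P : Finset ι) (B : ι → Finset Ω) (h : ∑ p ∈ P, #(B p) < Fintype.card Ω) :
    ∃ ω, ∀ p ∈ P, ω ∉ B p := by
  by_contra! hcover
  have : (univ : Finset Ω) ⊆ P.biUnion B := fun ω _ => by simpa using hcover ω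
  exact (card_le_card this |>.trans card_biUnion_le).not_gt h

theorem add_one_pow_le_four_mul_pow {n j : ℕ} (hj : j ≤ n) :
    ((n : ℝ) + 1) ^ j ≤ 4 * (n : ℝ) ^ j := by
  rcases Nat.eq_zero_or_pos n with rfl | hn
  · simp [Nat.le_zero.1 hj]
  have hn' : (0 : ℝ) < n := by exact_mod_cast hn
  calc ((n : ℝ) + 1) ^ j = (n : ℝ) ^ j * (1 + (n : ℝ)⁻¹) ^ j := by
        rw [← mul_pow]; field_simp
    _ ≤ (n : ℝ) ^ j * (1 + (n : ℝ)⁻¹) ^ n := by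
        gcongr
        exact le_add_of_nonneg_right (by positivity)
    _ ≤ (n : ℝ) ^ j * Real.exp 1 := by gcongr; exact Real.one_add_inv_pow_le_exp
    _ ≤ 4 * (n : ℝ) ^ j := by
        rw [mul_comm]; gcongr; linarith [Real.exp_one_lt_d9]

theorem mul_one_sub_pow_lt_one {M p : ℝ} {m : ℕ} (hM : 0 < M) (hp : p ≤ 1)
    (h : Real.log M < p * m) : M * (1 - p) ^ m < 1 := by
  calc M * (1 - p) ^ m ≤ Real.exp (Real.log M) * Real.exp (-p) ^ m := by
        rw [Real.exp_log hM]
        gcongr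
        linarith [Real.add_one_le_exp (-p)]
    _ = Real.exp (Real.log M - p * m) := by
        rw [← Real.exp_nat_mul, ← Real.exp_add]; ring_nf
    _ < 1 := Real.exp_lt_one_iff.2 (by linarith)

theorem card_sigma_powersetCard {α : Type*} (k : ℕ) (s : Finset α) :
    #((powersetCard k s).sigma fun S => S) = (#s).choose k * k := by
  rw [card_sigma, sum_congr rfl fun S hS => (mem_powersetCard.1 hS).2, sum_const,
    card_powersetCard, smul_eq_mul]

section Colorings

variable {α β : Type*} [Fintype α] [DecidableEq α] [Fintype β] [DecidableEq β]

-- The colourings `g` with `g y = b` and `g a ≠ b` for `a ∈ S \ {y}`, as a box of functions.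
def isolatingColorings (S : Finset α) (y : α) (b : β) : Finset (α → β) :=
  Fintype.piFinset fun a => if a = y then {b} else if a ∈ S then univ.erase b else univ

theorem inter_filter_eq_singleton_of_mem_isolatingColorings {S : Finset α} {y : α} {b : β}
    {g : α → β} (hg : g ∈ isolatingColorings S y b) (hy : y ∈ S) :
    S ∩ ({a | g a = b} : Finset α) = {y} := by
  ext a
  have := Fintype.mem_piFinset.1 hg a
  by_cases hay : a = y
  · subst hay; simp_all
  · by_cases haS : a ∈ S <;> simp_all

theorem card_isolatingColorings {S : Finset α} {y : α} (b : β) (hy : y ∈ S) :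
    #(isolatingColorings S y b) =
      (Fintype.card β - 1) ^ (#S - 1) * Fintype.card β ^ (Fintype.card α - #S) := by
  have hS : ∏ a ∈ S.erase y, #(if a = y then {b} else if a ∈ S then univ.erase b else univ) =
      (Fintype.card β - 1) ^ (#S - 1) := by
    rw [prod_congr rfl fun a ha => by rw [if_neg (ne_of_mem_erase ha),
      if_pos (mem_of_mem_erase ha), card_erase_of_mem (mem_univ b), card_univ],
      prod_const, card_erase_of_mem hy]
  have hSc : ∏ a ∈ Sᶜ, #(if a = y then {b} else if a ∈ S then univ.erase b else univ) =
      Fintype.card β ^ (Fintype.card α - #S) := by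
    rw [prod_congr rfl fun a ha => by
      rw [if_neg fun (h : a = y) => mem_compl.1 ha (h ▸ hy), if_neg (mem_compl.1 ha), card_univ],
      prod_const, card_compl]
  rw [isolatingColorings, Fintype.card_piFinset, ← prod_mul_prod_compl S,
    ← mul_prod_erase S _ hy, if_pos rfl, card_singleton, one_mul, hS, hSc]

theorem card_pow_le_four_mul_card_isolatingColorings {S : Finset α} {y : α} (b : β)
    (hy : y ∈ S) (hS : #S ≤ Fintype.card β) :
    (Fintype.card β : ℝ) ^ Fintype.card α ≤
      4 * Fintype.card β * #(isolatingColorings S y b) := by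
  set k := Fintype.card β
  have hS₀ : 1 ≤ #S := card_pos.2 ⟨y, hy⟩
  have hsplit : Fintype.card α = 1 + (#S - 1) + (Fintype.card α - #S) := by
    have := card_le_univ S; omega
  have hpow : (k : ℝ) ^ (#S - 1) ≤ 4 * ((k - 1 : ℕ) : ℝ) ^ (#S - 1) := by
    simpa [Nat.cast_sub (hS₀.trans hS)] using
      add_one_pow_le_four_mul_pow (n := k - 1) (j := #S - 1) (by omega)
  rw [card_isolatingColorings b hy]
  calc (k : ℝ) ^ Fintype.card α = k * k ^ (#S - 1) * k ^ (Fintype.card α - #S) := by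
        conv_lhs => rw [hsplit]
        rw [pow_add, pow_add, pow_one]
    _ ≤ k * (4 * ((k - 1 : ℕ) : ℝ) ^ (#S - 1)) * k ^ (Fintype.card α - #S) := by gcongr
    _ = _ := by push_cast; ring

theorem card_compl_isolatingColorings_le {S : Finset α} {y : α} (b : β)
    (hy : y ∈ S) (hS : #S ≤ Fintype.card β) :
    (#(isolatingColorings S y b)ᶜ : ℝ) ≤
      (1 - 1 / (4 * Fintype.card β)) * Fintype.card β ^ Fintype.card α := by
  have hk : (0 : ℝ) < Fintype.card β := by exact_mod_cast Fintype.card_pos_iff.2 ⟨b⟩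
  have hlow := card_pow_le_four_mul_card_isolatingColorings b hy hS
  have hle : #(isolatingColorings S y b) ≤ Fintype.card β ^ Fintype.card α :=
    (card_le_univ _).trans_eq Fintype.card_fun
  have hdiv : (Fintype.card β : ℝ) ^ Fintype.card α / (4 * Fintype.card β) ≤
      #(isolatingColorings S y b) := by
    rw [div_le_iff₀ (by positivity)]; linarith
  rw [card_compl, Fintype.card_fun, Nat.cast_sub hle, Nat.cast_pow]
  calc _ ≤ (Fintype.card β : ℝ) ^ Fintype.card α -
        Fintype.card β ^ Fintype.card α / (4 * Fintype.card β) := by linarith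
    _ = _ := by ring

theorem exists_forall_mem_isolatingColorings (b : β) (hβα : Fintype.card β ≤ Fintype.card α)
    {m : ℕ} (hm : 4 * Fintype.card β * (Fintype.card β + 1) * Real.log (Fintype.card α) < m) :
    ∃ ω : Fin m → α → β, ∀ S : Finset α, #S = Fintype.card β →
      ∀ y ∈ S, ∃ j, ω j ∈ isolatingColorings S y b := by
  set k := Fintype.card β
  set n := Fintype.card α
  have hk : 0 < k := Fintype.card_pos_iff.2 ⟨b⟩
  have hn : (0 : ℝ) < n := by exact_mod_cast hk.trans_le hβα
  have hp : 1 / (4 * k : ℝ) ≤ 1 := by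
    rw [div_le_one (by positivity)]; linarith [show (1 : ℝ) ≤ k by exact_mod_cast hk]
  let P : Finset (Σ _ : Finset α, α) := (powersetCard k univ).sigma fun S => S
  let bad (p : Σ _ : Finset α, α) : Finset (Fin m → α → β) :=
    Fintype.piFinset fun _ => (isolatingColorings p.1 p.2 b)ᶜ
  have hP : (#P : ℝ) ≤ n ^ (k + 1) := by
    rw [card_sigma_powersetCard, card_univ, pow_succ]
    exact_mod_cast Nat.mul_le_mul (Nat.choose_le_pow n k) hβα
  have hbad : ∀ p ∈ P, (#(bad p) : ℝ) ≤ ((1 - 1 / (4 * k)) * k ^ n) ^ m := by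
    intro p hp
    simp only [P, mem_sigma, mem_powersetCard] at hp
    simp only [bad, Fintype.card_piFinset, prod_const, card_univ, Fintype.card_fin, Nat.cast_pow]
    gcongr
    exact card_compl_isolatingColorings_le b hp.2 hp.1.2.le
  have hsmall : (n : ℝ) ^ (k + 1) * (1 - 1 / (4 * k)) ^ m < 1 := by
    apply mul_one_sub_pow_lt_one (by positivity) hp
    rw [Real.log_pow, one_div_mul_eq_div, lt_div_iff₀ (by positivity)]
    push_cast
    linarith
  have hsum : ∑ p ∈ P, #(bad p) < Fintype.card (Fin m → α → β) := by
    rw [Fintype.card_fun, Fintype.card_fun, Fintype.card_fin]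
    suffices (∑ p ∈ P, #(bad p) : ℝ) < ((k : ℝ) ^ n) ^ m by exact_mod_cast this
    calc (∑ p ∈ P, #(bad p) : ℝ) ≤ #P * ((1 - 1 / (4 * k)) * k ^ n) ^ m := by
          simpa using sum_le_sum hbad
      _ ≤ n ^ (k + 1) * ((1 - 1 / (4 * k)) * k ^ n) ^ m := by gcongr
      _ = (n ^ (k + 1) * (1 - 1 / (4 * k)) ^ m) * ((k : ℝ) ^ n) ^ m := by
          rw [mul_pow]; ring
      _ < ((k : ℝ) ^ n) ^ m := mul_lt_of_lt_one_left (by positivity) hsmall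
  obtain ⟨ω, hω⟩ := exists_forall_notMem_of_sum_card_lt P bad hsum
  refine ⟨ω, fun S hS y hy => ?_⟩
  simpa [bad, Fintype.mem_piFinset] using hω ⟨S, y⟩ (by simp [P, hS, hy])

end Colorings

section StronglySelective

variable {α : Type*} [DecidableEq α]

def IsStronglySelective (c : ℕ) (F : Finset (Finset α)) : Prop :=
  ∀ S : Finset α, #S ≤ c → ∀ y ∈ S, ∃ A ∈ F, S ∩ A = {y}

theorem isStronglySelective_of_card_eq [Fintype α] {c : ℕ} {F : Finset (Finset α)}
    (hc : c ≤ Fintype.card α) (h : ∀ S : Finset α, #S = c → ∀ y ∈ S, ∃ A ∈ F, S ∩ A = {y}) :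
    IsStronglySelective c F := by
  intro S hS y hy
  obtain ⟨T, hST, -, hT⟩ := exists_subsuperset_card_eq (subset_univ S) hS hc
  obtain ⟨A, hA, hTA⟩ := h T hT y (hST hy)
  have hyA : y ∈ A := (mem_inter.1 (hTA ▸ mem_singleton_self y)).2
  exact ⟨A, hA, Subset.antisymm (hTA ▸ inter_subset_inter_right hST)
    (singleton_subset_iff.2 (mem_inter.2 ⟨hy, hyA⟩))⟩

theorem exists_isStronglySelective_card_le [Fintype α] {c m : ℕ} (hc : 0 < c)
    (hcα : c ≤ Fintype.card α) (hm : 4 * c * (c + 1) * Real.log (Fintype.card α) < m) :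
    ∃ F : Finset (Finset α), IsStronglySelective c F ∧ #F ≤ m := by
  let b : Fin c := ⟨0, hc⟩
  obtain ⟨ω, hω⟩ := exists_forall_mem_isolatingColorings b (by simpa using hcα)
    (by simpa using hm)
  refine ⟨univ.image fun j => ({a | ω j a = b} : Finset α), isStronglySelective_of_card_eq hcα ?_,
    card_image_le.trans_eq (card_fin m)⟩
  intro S hS y hy
  obtain ⟨j, hj⟩ := hω S (by simpa using hS) y hy
  exact ⟨_, mem_image_of_mem _ (mem_univ j),
    inter_filter_eq_singleton_of_mem_isolatingColorings hj hy⟩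

end StronglySelective

theorem IsStronglySelective.isSSF {N c : ℕ} {F : Finset (Finset (Icc 1 N))}
    (hF : IsStronglySelective c F) :
    IsSSF N c (F.image (map (Function.Embedding.subtype (· ∈ Icc 1 N)))) := by
  refine ⟨fun A hA => ?_, fun S hS _ hSc y hy => ?_⟩
  · obtain ⟨B, -, rfl⟩ := mem_image.1 hA
    intro x hx
    obtain ⟨a, -, rfl⟩ := mem_map.1 hx
    exact a.2
  · obtain ⟨B, hB, hSB⟩ := hF (S.subtype (· ∈ Icc 1 N))
      ((card_subtype _ _).trans_le ((card_filter_le _ _).trans hSc)) ⟨y, hS hy⟩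
      (mem_subtype.2 hy)
    refine ⟨B.map _, mem_image_of_mem _ hB, ?_⟩
    rw [← subtype_map_of_mem hS, ← map_inter, hSB, map_singleton]
    rfl

/-- **Existence of small strongly selective families** (Clementi–Monti–Silvestri):
there is an absolute constant `K > 0` such that for all `2 ≤ c ≤ N` there exists an
`(N,c)`-strongly selective family of size at most `K·c²·log N`. -/
theorem exists_small_ssf :
    ∃ K : ℝ, 0 < K ∧
      ∀ N c : ℕ, 2 ≤ c → c ≤ N →
        ∃ F : Finset (Finset ℕ), IsSSF N c F ∧
          (F.card : ℝ) ≤ K * (c : ℝ) ^ 2 * Real.log N := by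
  refine ⟨9, by norm_num, fun N c hc hcN => ?_⟩
  have hcard : Fintype.card (Icc 1 N) = N := by simp
  have hc' : (2 : ℝ) ≤ c := by exact_mod_cast hc
  have hlog : Real.log 2 ≤ Real.log N := Real.log_le_log two_pos (by exact_mod_cast hc.trans hcN)
  have hlog₀ : 0 < Real.log N := by linarith [Real.log_two_gt_d9]
  have hm : 4 * c * (c + 1) * Real.log (Fintype.card (Icc 1 N)) <
      ⌈8 * (c : ℝ) ^ 2 * Real.log N⌉₊ := by
    rw [hcard]
    refine lt_of_lt_of_le ?_ (Nat.le_ceil _)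
    nlinarith [mul_pos (by nlinarith : (0 : ℝ) < 4 * c * (c - 1)) hlog₀]
  obtain ⟨F, hF, hFm⟩ := exists_isStronglySelective_card_le (by omega) (by rwa [hcard]) hm
  refine ⟨_, hF.isSSF, ?_⟩
  calc (#(F.image _) : ℝ) ≤ ⌈8 * (c : ℝ) ^ 2 * Real.log N⌉₊ := by
        exact_mod_cast card_image_le.trans hFm
    _ ≤ 8 * (c : ℝ) ^ 2 * Real.log N + 1 := (Nat.ceil_lt_add_one (by positivity)).le
    _ ≤ 9 * (c : ℝ) ^ 2 * Real.log N := by nlinarith [Real.log_two_gt_d9]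
end
end
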